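/- Let γ : [0,1] → ℝ⁴ be the curve γ(t) = (1 − 2t, t(t−1), t(t−1), (√2+1)(2t−1)), and let G be the real 4×4 matrix with rows (√2, 0, 0, 1), (0, −√2, 1, 0), (0, −1, √2, 0), (−1, 0, 0, −√2). Then γ(1) = G · γ(0), and for every t ∈ [0,1] both γ₁(t)·γ̇₄(t) − γ₄(t)·γ̇₁(t) = 0 and γ₂(t)·γ̇₃(t) − γ₃(t)·γ̇₂(t) = 0, where γ̇ denotes the derivative of γ. -/
import Mathlib


open Matrix

noncomputable def Gmat : Matrix (Fin 4) (Fin 4) ℝ :=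
  !![Real.sqrt 2, 0, 0, 1;
     0, -Real.sqrt 2, 1, 0;
     0, -1, Real.sqrt 2, 0;
     -1, 0, 0, -Real.sqrt 2]

/-- The curve `γ(t) = (1 - 2t, t(t-1), t(t-1), (√2+1)(2t-1))`. -/
noncomputable def gammaCurve (t : ℝ) : Fin 4 → ℝ :=
  ![1 - 2 * t, t * (t - 1), t * (t - 1), (Real.sqrt 2 + 1) * (2 * t - 1)]

lemma gamma0 : (fun s => gammaCurve s 0) = fun s : ℝ => 1 - 2 * s := by
  funext s; simp [gammaCurve]

lemma gamma1 : (fun s => gammaCurve s 1) = fun s : ℝ => s * (s - 1) := by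
  funext s; simp [gammaCurve]

lemma gamma2 : (fun s => gammaCurve s 2) = fun s : ℝ => s * (s - 1) := by
  funext s; simp [gammaCurve]

lemma gamma3 : (fun s => gammaCurve s 3) =
    fun s : ℝ => (Real.sqrt 2 + 1) * (2 * s - 1) := by
  funext s; simp [gammaCurve]

lemma dgamma0 (t : ℝ) : deriv (fun s => gammaCurve s 0) t = -2 := by
  rw [gamma0]
  have : HasDerivAt (fun s : ℝ => 1 - 2 * s) (-2) t := by
    simpa using ((hasDerivAt_id t).const_mul 2).const_sub 1
  exact this.deriv

lemma dgamma12 (t : ℝ) : deriv (fun s : ℝ => s * (s - 1)) t = 2 * t - 1 := by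
  have : HasDerivAt (fun s : ℝ => s * (s - 1)) (1 * (t - 1) + t * 1) t :=
    (hasDerivAt_id t).mul ((hasDerivAt_id t).sub_const 1)
  rw [this.deriv]; ring

lemma dgamma3 (t : ℝ) : deriv (fun s => gammaCurve s 3) t
    = (Real.sqrt 2 + 1) * 2 := by
  rw [gamma3]
  have : HasDerivAt (fun s : ℝ => (Real.sqrt 2 + 1) * (2 * s - 1))
      ((Real.sqrt 2 + 1) * 2) t := by
    simpa using (((hasDerivAt_id t).const_mul 2).sub_const 1).const_mul
      (Real.sqrt 2 + 1)
  exact this.deriv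

/-- The curve `γ` joins `γ(0)` to `γ(1) = G·γ(0)`, and the connection form
vanishes along `γ`: `α_{γ(t)}(γ̇(t)) = 0` and `β_{γ(t)}(γ̇(t)) = 0` on `[0,1]`. -/
theorem gammaCurve_closes_up_and_theta_vanishes :
    gammaCurve 1 = Gmat.mulVec (gammaCurve 0) ∧
    ∀ t ∈ Set.Icc (0 : ℝ) 1,
      gammaCurve t 0 * deriv (fun s => gammaCurve s 3) t -
        gammaCurve t 3 * deriv (fun s => gammaCurve s 0) t = 0 ∧
      gammaCurve t 1 * deriv (fun s => gammaCurve s 2) t -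
        gammaCurve t 2 * deriv (fun s => gammaCurve s 1) t = 0 := by
  constructor
  · funext i
    have h2 : Real.sqrt 2 * Real.sqrt 2 = 2 := Real.mul_self_sqrt (by norm_num)
    fin_cases i <;>
      simp [gammaCurve, Gmat, mulVec, dotProduct, Fin.sum_univ_four] <;> ring_nf <;>
      nlinarith [h2]
  · intro t _
    constructor
    · rw [dgamma3, dgamma0]
      simp [gammaCurve]; ring
    · have h1 : (fun s => gammaCurve s 1) = fun s : ℝ => s * (s - 1) := gamma1
      have h2 : (fun s => gammaCurve s 2) = fun s : ℝ => s * (s - 1) := gamma2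
      rw [h1, h2, dgamma12]
      simp [gammaCurve]
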